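/- For integers c, d and nonnegative integer k, the maximum degree in A of the Laurent polynomial sum_{i=0}^{k} binom(k,i) A^{c-2i} (-A^2 - A^{-2})^{d+i} is at most c + 2d - 4k. -/

import Mathlib

/-!
With `δ = -A^2 - A^{-2}`, the binomial theorem collapses the sum to `A^c δ^d (1 + A^{-2} δ)^k`,
and `1 + A^{-2} δ = -A^{-4}`. Hence the sum is `(-1)^k A^{c - 4k} δ^d`, whose degree is at most
`c - 4k + 2d` because `δ` has degree `2`.
-/

open LaurentPolynomial Finset

namespace LaurentPolynomial

variable {R : Type*}

section Semiring

variable [Semiring R]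

theorem degree_mul_le (f g : R[T;T⁻¹]) : (f * g).degree ≤ f.degree + g.degree :=
  AddMonoidAlgebra.sup_support_coeff_mul_le (fun _ _ => (WithBot.coe_add _ _).le) f g

theorem degree_pow_le (f : R[T;T⁻¹]) (n : ℕ) : (f ^ n).degree ≤ n • f.degree :=
  AddMonoidAlgebra.sup_support_pow_le le_rfl (fun _ _ => (WithBot.coe_add _ _).le) n f

theorem coeff_eq_zero_of_degree_lt {f : R[T;T⁻¹]} {n : ℤ} (h : f.degree < n) :
    f.coeff n = 0 :=
  AddMonoidAlgebra.coeff_eq_zero_of_not_le_supDegree (D := WithBot.some) h.not_ge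

end Semiring

section Ring

variable [Ring R]

theorem degree_neg (f : R[T;T⁻¹]) : (-f).degree = f.degree :=
  AddMonoidAlgebra.supDegree_neg

theorem degree_sub_le (f g : R[T;T⁻¹]) : (f - g).degree ≤ max f.degree g.degree :=
  AddMonoidAlgebra.supDegree_sub_le

theorem degree_neg_T_two_sub_T_neg_two_le : (-T 2 - T (-2) : R[T;T⁻¹]).degree ≤ (2 : ℤ) :=
  (degree_sub_le _ _).trans <| max_le ((degree_neg _).trans_le (degree_T_le 2))
    ((degree_T_le (-2)).trans (WithBot.coe_le_coe.2 (by norm_num)))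

theorem T_neg_two_mul_neg_T_two_sub_T_neg_two_add_one :
    (T (-2) * (-T 2 - T (-2)) + 1 : R[T;T⁻¹]) = -T (-4) := by
  rw [mul_sub, mul_neg, ← T_add, ← T_add]
  norm_num [T_zero]
  abel

end Ring

theorem sum_choose_mul_T_mul_pow [CommRing R] (x : R[T;T⁻¹]) (c e : ℤ) (d k : ℕ) :
    ∑ i ∈ range (k + 1), C (k.choose i : R) * T (c - e * i) * x ^ (d + i) =
      T c * x ^ d * (T (-e) * x + 1) ^ k := by
  rw [add_pow, mul_sum]
  refine sum_congr rfl fun i _ => ?_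
  rw [map_natCast, one_pow, mul_one, mul_pow, T_pow, pow_add, sub_eq_add_neg, T_add]
  ring_nf

end LaurentPolynomial

/-- Lemma 3.1 (cancellation lemma): the Laurent polynomial
`∑_{i=0}^{k} C(k,i) A^{c-2i} (-A^2 - A^{-2})^{d+i}` has all coefficients of
powers above `A^{c+2d-4k}` equal to zero, i.e. its maximum degree in `A`
is at most `c + 2d - 4k`. -/
theorem cancellation_lemma (c : ℤ) (d k : ℕ) (m : ℤ)
    (hm : c + 2 * (d : ℤ) - 4 * (k : ℤ) < m) :
    (∑ i ∈ Finset.range (k + 1),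
        LaurentPolynomial.C ((k.choose i : ℤ)) * T (c - 2 * (i : ℤ)) *
          (-T 2 - T (-2)) ^ (d + i) : LaurentPolynomial ℤ).coeff m = 0 := by
  apply coeff_eq_zero_of_degree_lt
  rw [sum_choose_mul_T_mul_pow, T_neg_two_mul_neg_T_two_sub_T_neg_two_add_one]
  have h_deg : (T c * (-T 2 - T (-2)) ^ d * (-T (-4)) ^ k : ℤ[T;T⁻¹]).degree ≤
      (c : WithBot ℤ) + d • ((2 : ℤ) : WithBot ℤ) + k • ((-4 : ℤ) : WithBot ℤ) := by
    refine (degree_mul_le _ _).trans (add_le_add ((degree_mul_le _ _).trans ?_) ?_)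
    · exact add_le_add (degree_T_le c)
        ((degree_pow_le _ _).trans (nsmul_le_nsmul_right degree_neg_T_two_sub_T_neg_two_le _))
    · exact (degree_pow_le _ _).trans
        (nsmul_le_nsmul_right ((degree_neg _).trans_le (degree_T_le (-4))) _)
  refine h_deg.trans_lt (lt_of_eq_of_lt ?_ (WithBot.coe_lt_coe.2 hm))
  rw [← WithBot.coe_nsmul, ← WithBot.coe_nsmul, ← WithBot.coe_add, ← WithBot.coe_add,
    nsmul_eq_mul, nsmul_eq_mul]
  congr 1
  ring
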